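/- arXiv:1011.2235 — 3 statements merged into one kernel-verified Lean document; each statement's English description precedes it below -/
import Mathlib

section
/- Let k ≥ 1 and let L_1, …, L_k be positive integers. Suppose given a hierarchical family of real-valued arrays x^{(1)}, …, x^{(k)}, where x^{(j)} assigns a real number to every j-tuple (l_1,…,l_j) with 1 ≤ l_i ≤ L_i, and write x := x^{(k)}, n := L_1⋯L_k, ‖x‖ for the ℓ²-norm of the full bottom-level array, x_av := (1/n)·∑ x(l_1,…,l_k), and m^{(j+1)}(s) := (1/L_{j+1})·∑_{c=1}^{L_{j+1}} x^{(j+1)}(s,c) for a j-tuple s. If ε ≥ 0 and for every level j ∈ {1,…,k−1} and every j-tuple s one has |x^{(j)}(s) − m^{(j+1)}(s)| ≤ ε·‖x‖, then the top-level mean m̄ := (1/L_1)·∑_{l_1=1}^{L_1} x^{(1)}(l_1) satisfies |m̄ − x_av| ≤ (k−1)·ε·‖x‖. -/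
/-! The level-`j` mean `A j := 𝔼 s, x^{(j)}(s)` is the mean over the level-`(j+1)` tuples taken
fiberwise, so `A j - A (j+1)` is the average of the deviations `x^{(j)}(s) - m^{(j+1)}(s)` and is at
most `ε‖x‖` in absolute value. The top mean is `A 1` and `x_av` is `A k`, so the `k - 1` steps
telescope to the bound. -/

open Finset
open scoped BigOperators

section

variable {ι α M : Type*}

lemma Finset.abs_expect_le_of_forall_abs_le [Field α] [LinearOrder α] [IsStrictOrderedRing α]
    (s : Finset ι) {f : ι → α} {δ : α} (hδ : 0 ≤ δ) (h : ∀ i ∈ s, |f i| ≤ δ) :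
    |𝔼 i ∈ s, f i| ≤ δ := by
  obtain rfl | hs := s.eq_empty_or_nonempty
  · simpa using hδ
  · exact (abs_expect_le s f).trans (expect_le hs h)

variable [AddCommMonoid M] [Module ℚ≥0 M]

lemma Fintype.expect_unique [Fintype ι] [Unique ι] (f : ι → M) : 𝔼 i, f i = f default := by
  rw [univ_unique, expect_singleton]

lemma Fin.expect_univ_pi_snoc {n : ℕ} {α : Fin (n + 1) → Type*} [∀ i, Fintype (α i)]
    (f : (∀ i, α i) → M) :
    𝔼 t, f t =
      𝔼 s : (∀ i : Fin n, α i.castSucc), 𝔼 c : α (Fin.last n), f (Fin.snoc s c) := by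
  rw [← Finset.expect_product', univ_product_univ]
  exact Fintype.expect_equiv ((Fin.snocEquiv _).symm.trans (Equiv.prodComm _ _)) _ _
    fun t => by simp [Fin.snocEquiv]

end

namespace MultiscaleGossip

variable {L : ℕ → ℕ}

lemma card_tuples (j : ℕ) :
    Fintype.card ((i : Fin j) → Fin (L i)) = ∏ i ∈ range j, L i := by
  simp [Fintype.card_pi, Fin.prod_univ_eq_prod_range (fun i => L i)]

lemma expect_tuples_succ {j : ℕ} (f : ((i : Fin (j + 1)) → Fin (L i)) → ℝ) :
    𝔼 t, f t = 𝔼 s : (i : Fin j) → Fin (L i), 𝔼 c : Fin (L j), f (Fin.snoc s c) :=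
  Fin.expect_univ_pi_snoc f

lemma abs_expect_sub_expect_tuples_succ_le {j : ℕ} (a : ((i : Fin j) → Fin (L i)) → ℝ)
    (b : ((i : Fin (j + 1)) → Fin (L i)) → ℝ) {δ : ℝ} (hδ : 0 ≤ δ)
    (h : ∀ s, |a s - 𝔼 c, b (Fin.snoc s c)| ≤ δ) : |𝔼 s, a s - 𝔼 t, b t| ≤ δ := by
  rw [expect_tuples_succ, ← expect_sub_distrib]
  exact abs_expect_le_of_forall_abs_le univ hδ fun s _ => h s

end MultiscaleGossip

open MultiscaleGossip in
/-- Levels are 0-indexed: `L i` is the paper's `L_{i+1}`, and `x j` lives on the `j`-tuples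
`(i : Fin j) → Fin (L i)`. -/
theorem multiscale_gossip_top_mean_error_general
    (k : ℕ) (hk : 1 ≤ k) (L : ℕ → ℕ)
    (x : (j : ℕ) → ((i : Fin j) → Fin (L i)) → ℝ)
    (ε : ℝ) (hε : 0 ≤ ε)
    (normx : ℝ)
    (hnorm : normx = Real.sqrt (∑ t : (i : Fin k) → Fin (L i), (x k t) ^ 2))
    (xav : ℝ)
    (hxav : xav = (∑ t : (i : Fin k) → Fin (L i), x k t) / (∏ i ∈ Finset.range k, (L i : ℝ)))
    (hacc : ∀ j, 1 ≤ j → j < k → ∀ s : (i : Fin j) → Fin (L i),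
      |x j s - (∑ c : Fin (L j), x (j + 1) (Fin.snoc s c)) / (L j : ℝ)| ≤ ε * normx) :
    |(∑ c : Fin (L 0), x 1 (Fin.snoc (fun i : Fin 0 => i.elim0) c)) / (L 0 : ℝ) - xav|
      ≤ ((k : ℝ) - 1) * ε * normx := by
  set A : ℕ → ℝ := fun j => 𝔼 s : (i : Fin j) → Fin (L i), x j s
  have hεx : 0 ≤ ε * normx := mul_nonneg hε (hnorm ▸ Real.sqrt_nonneg _)
  have htop :
      (∑ c : Fin (L 0), x 1 (Fin.snoc (fun i : Fin 0 => i.elim0) c)) / (L 0 : ℝ) = A 1 := by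
    dsimp only [A]
    rw [expect_tuples_succ, Fintype.expect_unique, Fintype.expect_eq_sum_div_card, Fintype.card_fin,
      Subsingleton.elim (fun i : Fin 0 => i.elim0) default]
  have hbottom : xav = A k := by
    dsimp only [A]
    rw [hxav, Fintype.expect_eq_sum_div_card, card_tuples, Nat.cast_prod]
  have hstep : ∀ {j}, 1 ≤ j → j < k → dist (A j) (A (j + 1)) ≤ ε * normx :=
    fun h1j hjk => abs_expect_sub_expect_tuples_succ_le _ _ hεx fun s => by
      rw [Fintype.expect_eq_sum_div_card, Fintype.card_fin]
      exact hacc _ h1j hjk s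
  calc |_ - xav| = dist (A 1) (A k) := by rw [htop, hbottom, Real.dist_eq]
    _ ≤ ∑ _ ∈ Ico 1 k, ε * normx := dist_le_Ico_sum_of_dist_le hk hstep
    _ = ((k : ℝ) - 1) * ε * normx := by simp [Nat.cast_sub hk, mul_assoc]

/-- **Error-propagation bound for multiscale gossip (term T₂).**
Hierarchical family with `k` levels and branching factors `L 0, …, L (k-1)`
(0-indexed: `L (i-1)` is the paper's `L_i`).  The level-`j` array `x j` is
defined on `j`-tuples `(i : Fin j) → Fin (L i)`.  If at every level
`j ∈ {1,…,k-1}` each value differs from the mean of its children by at most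
`ε * ‖x‖`, then the top-level mean is within `(k-1) * ε * ‖x‖` of the global
average `x_av`. -/
theorem multiscale_gossip_top_mean_error
    (k : ℕ) (hk : 1 ≤ k) (L : ℕ → ℕ) (hL : ∀ i, i < k → 0 < L i)
    (x : (j : ℕ) → ((i : Fin j) → Fin (L i)) → ℝ)
    (ε : ℝ) (hε : 0 ≤ ε)
    (normx : ℝ)
    (hnorm : normx = Real.sqrt (∑ t : (i : Fin k) → Fin (L i), (x k t) ^ 2))
    (xav : ℝ)
    (hxav : xav = (∑ t : (i : Fin k) → Fin (L i), x k t) / (∏ i ∈ Finset.range k, (L i : ℝ)))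
    (hacc : ∀ j, 1 ≤ j → j < k → ∀ s : (i : Fin j) → Fin (L i),
      |x j s - (∑ c : Fin (L j), x (j + 1) (Fin.snoc s c)) / (L j : ℝ)| ≤ ε * normx) :
    |(∑ c : Fin (L 0), x 1 (Fin.snoc (fun i : Fin 0 => i.elim0) c)) / (L 0 : ℝ) - xav|
      ≤ ((k : ℝ) - 1) * ε * normx :=
  multiscale_gossip_top_mean_error_general k hk L x ε hε normx hnorm xav hxav hacc
end

section
/- Let k ≥ 1, let L_1, …, L_k be positive integers, n := L_1⋯L_k, and let ε ≥ 0. Suppose given a hierarchical family of real-valued arrays x^{(1)}, …, x^{(k)} (with x^{(j)} defined on j-tuples (l_1,…,l_j), 1 ≤ l_i ≤ L_i), write x := x^{(k)}, ‖x‖ for the ℓ²-norm of the full bottom-level array, x_av := (1/n)·∑ x(l_1,…,l_k), m^{(j+1)}(s) := (1/L_{j+1})·∑_{c=1}^{L_{j+1}} x^{(j+1)}(s,c), and m̄ := (1/L_1)·∑_{l_1=1}^{L_1} x^{(1)}(l_1). Assume: (i) |x^{(j)}(s) − m^{(j+1)}(s)| ≤ ε·‖x‖ for every j ∈ {1,…,k−1}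 and every j-tuple s; (ii) there are reals y_1,…,y_{L_1} with ∑_{s=1}^{L_1} (y_s − m̄)² ≤ ε²·‖x‖² and ∑_{s=1}^{L_1} y_s = ∑_{s=1}^{L_1} x^{(1)}(s). Define z on k-tuples by z(l_1,…,l_k) := y_{l_1}. Then ∑ over all k-tuples of (z(l_1,…,l_k) − x_av)² ≤ (L_2⋯L_k)·ε²·‖x‖² + n·(k−1)²·ε²·‖x‖². -/
/-!
Let `a j` be the mean of the level-`j` array. Averaging hypothesis (i) over all `j`-tuples gives
`|a j - a (j + 1)| ≤ ε ‖x‖`, so `|m̄ - x_av| = |a 1 - a k| ≤ (k - 1) ε ‖x‖`. Since the `y s` have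
mean `m̄`, `∑ (y s - x_av)² = ∑ (y s - m̄)² + L₁ (m̄ - x_av)²`, and `z` repeats each `y s`
exactly `L₂⋯L_k` times.
-/

open Finset BigOperators

namespace Fin

lemma expect_pi_succ_eq_expect_expect_snoc {M : Type*} [AddCommMonoid M] [Module ℚ≥0 M]
    {n : ℕ} {α : Fin (n + 1) → Type*} [∀ i, Fintype (α i)] (f : (∀ i, α i) → M) :
    𝔼 t, f t = 𝔼 s : (∀ i : Fin n, α i.castSucc), 𝔼 c : α (last n), f (snoc s c) := by
  rw [← Fintype.expect_equiv (snocEquiv α) _ f fun _ => rfl, ← univ_product_univ,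
    expect_product, expect_comm]
  rfl

lemma sum_pi_succ_apply_zero {M : Type*} [AddCommMonoid M] {n : ℕ} {α : Fin (n + 1) → Type*}
    [∀ i, Fintype (α i)] (g : α 0 → M) :
    ∑ t : (∀ i, α i), g (t 0) = Fintype.card (∀ i : Fin n, α i.succ) • ∑ c, g c := by
  rw [← (consEquiv α).sum_comp, Fintype.sum_prod_type, smul_sum]
  simp [consEquiv]

end Fin

lemma Finset.sum_sq_sub_eq_sum_sq_sub_add_card_mul {R : Type*} [CommRing R] {ι : Type*}
    (s : Finset ι) (f : ι → R) {m : R} (hm : ∑ i ∈ s, f i = #s * m) (a : R) :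
    ∑ i ∈ s, (f i - a) ^ 2 = ∑ i ∈ s, (f i - m) ^ 2 + #s * (m - a) ^ 2 := by
  have hdev : ∑ i ∈ s, (f i - m) = 0 := by simp [sum_sub_distrib, hm]
  have hexpand (i : ι) :
      (f i - a) ^ 2 = (f i - m) ^ 2 + 2 * (m - a) * (f i - m) + (m - a) ^ 2 := by ring
  simp only [hexpand, sum_add_distrib, ← mul_sum, hdev, sum_const, nsmul_eq_mul]
  ring

lemma abs_sub_le_mul_of_abs_sub_succ_le {a : ℕ → ℝ} {m n : ℕ} (hmn : m ≤ n) {δ : ℝ}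
    (h : ∀ j, m ≤ j → j < n → |a j - a (j + 1)| ≤ δ) :
    |a m - a n| ≤ (n - m : ℕ) * δ := by
  simpa [Real.dist_eq] using dist_le_Ico_sum_of_dist_le (f := a) hmn (d := fun _ => δ)
    fun hj hjn => by rw [Real.dist_eq]; exact h _ hj hjn

section Hierarchy

variable {L : ℕ → ℕ}

lemma card_pi_fin_eq_prod_range {R : Type*} [CommSemiring R] (j : ℕ) :
    (Fintype.card ((i : Fin j) → Fin (L i)) : R) = ∏ i ∈ range j, (L i : R) := by
  simp [Fintype.card_pi, Fin.prod_univ_eq_prod_range (fun i => (L i : R))]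

lemma expect_pi_fin_eq_sum_div_prod_range {K : Type*} [Semifield K] [CharZero K] {j : ℕ}
    (f : ((i : Fin j) → Fin (L i)) → K) :
    𝔼 t, f t = (∑ t, f t) / ∏ i ∈ range j, (L i : K) := by
  rw [Fintype.expect_eq_sum_div_card, card_pi_fin_eq_prod_range]

lemma abs_expect_sub_expect_snoc_le {j : ℕ} (hL : ∀ i < j, 0 < L i)
    (f : ((i : Fin j) → Fin (L i)) → ℝ) (g : ((i : Fin (j + 1)) → Fin (L i)) → ℝ) {δ : ℝ}
    (h : ∀ s, |f s - 𝔼 c, g (Fin.snoc s c)| ≤ δ) :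
    |𝔼 s, f s - 𝔼 t, g t| ≤ δ := by
  have : Nonempty ((i : Fin j) → Fin (L i)) := ⟨fun i => ⟨0, hL i i.isLt⟩⟩
  have htower : 𝔼 t, g t = 𝔼 s : (i : Fin j) → Fin (L i), 𝔼 c, g (Fin.snoc s c) :=
    Fin.expect_pi_succ_eq_expect_expect_snoc (α := fun i => Fin (L i)) g
  rw [htower, ← expect_sub_distrib]
  exact (abs_expect_le _ _).trans (expect_le univ_nonempty fun s _ => h s)

end Hierarchy

theorem multiscale_gossip_final_sq_error_general
    (k : ℕ) (hk : 1 ≤ k) (L : ℕ → ℕ) (hL : ∀ i, i < k → 0 < L i)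
    (ε : ℝ)
    (x : (j : ℕ) → ((i : Fin j) → Fin (L i)) → ℝ)
    (normx xav mbar : ℝ)
    (hxav : xav = (∑ t : (i : Fin k) → Fin (L i), x k t) / (∏ i ∈ Finset.range k, (L i : ℝ)))
    (hmbar : mbar = (∑ c : Fin (L 0), x 1 (Fin.snoc (fun i : Fin 0 => i.elim0) c)) / (L 0 : ℝ))
    (hacc : ∀ j, 1 ≤ j → j < k → ∀ s : (i : Fin j) → Fin (L i),
      |x j s - (∑ c : Fin (L j), x (j + 1) (Fin.snoc s c)) / (L j : ℝ)| ≤ ε * normx)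
    (y : Fin (L 0) → ℝ)
    (hy1 : ∑ s : Fin (L 0), (y s - mbar) ^ 2 ≤ ε ^ 2 * normx ^ 2)
    (hy2 : ∑ s : Fin (L 0), y s
      = ∑ c : Fin (L 0), x 1 (Fin.snoc (fun i : Fin 0 => i.elim0) c)) :
    ∑ t : (i : Fin k) → Fin (L i), (y (t ⟨0, hk⟩) - xav) ^ 2
      ≤ (∏ i ∈ Finset.Ico 1 k, (L i : ℝ)) * ε ^ 2 * normx ^ 2
        + (∏ i ∈ Finset.range k, (L i : ℝ)) * ((k : ℝ) - 1) ^ 2 * ε ^ 2 * normx ^ 2 := by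
  set a : ℕ → ℝ := fun j => 𝔼 t : (i : Fin j) → Fin (L i), x j t
  have hstep : ∀ j, 1 ≤ j → j < k → |a j - a (j + 1)| ≤ ε * normx := fun j hj hjk =>
    abs_expect_sub_expect_snoc_le (fun i hi => hL i (hi.trans hjk)) _ _ fun s => by
      simpa [Fintype.expect_eq_sum_div_card] using hacc j hj hjk s
  have hxav_eq : xav = a k := hxav.trans (expect_pi_fin_eq_sum_div_prod_range _).symm
  have hmbar_eq : mbar = a 1 := by
    rw [hmbar, show a 1 = _ from
      Fin.expect_pi_succ_eq_expect_expect_snoc (α := fun i => Fin (L i)) (x 1)]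
    simp [Fintype.expect_eq_sum_div_card, Subsingleton.elim _ (fun i : Fin 0 => i.elim0)]
  have hdrift : |mbar - xav| ≤ ((k : ℝ) - 1) * (ε * normx) := by
    simpa [hxav_eq, hmbar_eq, Nat.cast_sub hk] using abs_sub_le_mul_of_abs_sub_succ_le hk hstep
  have hvar : ∑ s, (y s - xav) ^ 2 = ∑ s, (y s - mbar) ^ 2 + L 0 * (mbar - xav) ^ 2 := by
    have hL0 : (L 0 : ℝ) ≠ 0 := by exact_mod_cast (hL 0 hk).ne'
    simpa using sum_sq_sub_eq_sum_sq_sub_add_card_mul univ y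
      (by rw [hy2, hmbar, card_univ, Fintype.card_fin]; field_simp) xav
  obtain ⟨k, rfl⟩ : ∃ k', k = k' + 1 := ⟨k - 1, by omega⟩
  have hcard :
      (Fintype.card ((i : Fin k) → Fin (L i.succ)) : ℝ) = ∏ i ∈ Ico 1 (k + 1), (L i : ℝ) := by
    refine (card_pi_fin_eq_prod_range (L := fun i => L (i + 1)) k).trans ?_
    rw [prod_Ico_eq_prod_range]
    simp [add_comm]
  calc ∑ t : (i : Fin (k + 1)) → Fin (L i), (y (t ⟨0, hk⟩) - xav) ^ 2
      = (∏ i ∈ Ico 1 (k + 1), (L i : ℝ))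
          * (∑ s, (y s - mbar) ^ 2 + L 0 * (mbar - xav) ^ 2) := by
        rw [← hvar, ← hcard, ← nsmul_eq_mul]
        exact Fin.sum_pi_succ_apply_zero (α := fun i => Fin (L i)) fun c => (y c - xav) ^ 2
    _ ≤ (∏ i ∈ Ico 1 (k + 1), (L i : ℝ)) * (ε ^ 2 * normx ^ 2
          + L 0 * ((((k + 1 : ℕ) : ℝ) - 1) * (ε * normx)) ^ 2) := by
        have hdrift' := abs_le.mp hdrift
        gcongr _ * (?_ + _ * ?_)
        exact sq_le_sq' hdrift'.1 hdrift'.2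
    _ = _ := by rw [prod_range_eq_mul_Ico _ k.succ_pos]; ring

/-- **Deterministic core of the final-error theorem for multiscale gossip.**
Hierarchical family with `k` levels and branching factors `L 0, …, L (k-1)`
(0-indexed: `L (i-1)` is the paper's `L_i`, so `L 0 = L_1`).  Assuming
(i) every level-`j` value (`1 ≤ j ≤ k-1`) is within `ε * ‖x‖` of the mean of
its children, and (ii) the post-top-level-gossip values `y` satisfy
`∑ (y s - m̄)² ≤ ε² ‖x‖²` and preserve the sum of the top-level values,
the final vector `z (l₁,…,l_k) = y l₁` satisfies
`∑ (z t - x_av)² ≤ (L_2⋯L_k) ε² ‖x‖² + n (k-1)² ε² ‖x‖²`. -/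
theorem multiscale_gossip_final_sq_error
    (k : ℕ) (hk : 1 ≤ k) (L : ℕ → ℕ) (hL : ∀ i, i < k → 0 < L i)
    (ε : ℝ) (hε : 0 ≤ ε)
    (x : (j : ℕ) → ((i : Fin j) → Fin (L i)) → ℝ)
    (normx xav mbar : ℝ)
    (hnorm : normx = Real.sqrt (∑ t : (i : Fin k) → Fin (L i), (x k t) ^ 2))
    (hxav : xav = (∑ t : (i : Fin k) → Fin (L i), x k t) / (∏ i ∈ Finset.range k, (L i : ℝ)))
    (hmbar : mbar = (∑ c : Fin (L 0), x 1 (Fin.snoc (fun i : Fin 0 => i.elim0) c)) / (L 0 : ℝ))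
    (hacc : ∀ j, 1 ≤ j → j < k → ∀ s : (i : Fin j) → Fin (L i),
      |x j s - (∑ c : Fin (L j), x (j + 1) (Fin.snoc s c)) / (L j : ℝ)| ≤ ε * normx)
    (y : Fin (L 0) → ℝ)
    (hy1 : ∑ s : Fin (L 0), (y s - mbar) ^ 2 ≤ ε ^ 2 * normx ^ 2)
    (hy2 : ∑ s : Fin (L 0), y s
      = ∑ c : Fin (L 0), x 1 (Fin.snoc (fun i : Fin 0 => i.elim0) c)) :
    ∑ t : (i : Fin k) → Fin (L i), (y (t ⟨0, hk⟩) - xav) ^ 2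
      ≤ (∏ i ∈ Finset.Ico 1 k, (L i : ℝ)) * ε ^ 2 * normx ^ 2
        + (∏ i ∈ Finset.range k, (L i : ℝ)) * ((k : ℝ) - 1) ^ 2 * ε ^ 2 * normx ^ 2 :=
  multiscale_gossip_final_sq_error_general k hk L hL ε x normx xav mbar hxav hmbar hacc y hy1 hy2
end

section
/- Under the hypotheses of the previous statement, assume additionally that L_j ≥ 2 for every j ∈ {1,…,k}. Then the final vector z (defined on k-tuples by z(l_1,…,l_k) := y_{l_1}) satisfies ‖z − x_av·𝟙‖ ≤ √2 · n · ε · ‖x‖, where 𝟙 is the all-ones array on k-tuples, n := L_1⋯L_k, and the norm is the ℓ²-norm over all k-tuples. In particular, if ‖x‖ ≠ 0, the final relative error ‖z − x_av·𝟙‖ / ‖x‖ is at most √2·n·ε. -/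
/-!
Walking down from a level-`j` node `s`, each level moves the value by at most `ε‖x‖` from the mean
of its children, so `x⁽ʲ⁾(s)` lies within `(k - j) ε‖x‖` of the mean of the leaves below `s`. Hence
`|m̄ - x_av| ≤ (k - 1) ε‖x‖`. Since `z` is constant on the `n / L₁` leaves below each level-one node,
`‖z - x_av 𝟙‖² ≤ (n / L₁) (2 ε²‖x‖² + 2 L₁ (k - 1)² ε²‖x‖²) ≤ 2 n² ε²‖x‖²`,
the last step because `1 + (k - 1)² ≤ 2ᵏ ≤ n`.
-/

open Finset

theorem abs_sum_div_card_sub_sum_div_card_le {ι : Type*} (s : Finset ι) {a b : ι → ℝ} {M : ℝ}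
    (hM : 0 ≤ M) (h : ∀ i ∈ s, |a i - b i| ≤ M) :
    |(∑ i ∈ s, a i) / #s - (∑ i ∈ s, b i) / #s| ≤ M := by
  rcases s.eq_empty_or_nonempty with rfl | hs
  · simpa
  rw [← sub_div, ← sum_sub_distrib, abs_div, Nat.abs_cast, div_le_iff₀ (by simpa using hs.card_pos)]
  calc |∑ i ∈ s, (a i - b i)| ≤ ∑ i ∈ s, |a i - b i| := abs_sum_le_sum_abs _ _
    _ ≤ ∑ _i ∈ s, M := sum_le_sum h
    _ = M * #s := by rw [sum_const, nsmul_eq_mul, mul_comm]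

theorem sum_sq_sub_le {ι : Type*} (s : Finset ι) (y : ι → ℝ) (a b : ℝ) :
    ∑ i ∈ s, (y i - b) ^ 2 ≤ 2 * ∑ i ∈ s, (y i - a) ^ 2 + 2 * #s * (a - b) ^ 2 := by
  calc ∑ i ∈ s, (y i - b) ^ 2 ≤ ∑ i ∈ s, 2 * ((y i - a) ^ 2 + (a - b) ^ 2) :=
        sum_le_sum fun i _ => by simpa using add_sq_le (a := y i - a) (b := a - b)
    _ = _ := by rw [← mul_sum, sum_add_distrib, sum_const, nsmul_eq_mul]; ring

section Hierarchy

variable {L : ℕ → ℕ} {k : ℕ}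

noncomputable def subtreeSum (f : ((i : Fin k) → Fin (L i)) → ℝ) (j : ℕ) (hj : j ≤ k)
    (s : (i : Fin j) → Fin (L i)) : ℝ :=
  ∑ t with Fin.take j hj t = s, f t

theorem subtreeSum_zero (f : ((i : Fin k) → Fin (L i)) → ℝ) (s : (i : Fin 0) → Fin (L i)) :
    subtreeSum f 0 k.zero_le s = ∑ t, f t := by
  simp [subtreeSum, Subsingleton.elim _ s]

theorem subtreeSum_self (f : ((i : Fin k) → Fin (L i)) → ℝ) (s : (i : Fin k) → Fin (L i)) :
    subtreeSum f k le_rfl s = f s := by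
  simp [subtreeSum, Fin.take_eq_self, sum_filter]

theorem subtreeSum_eq_sum_snoc (f : ((i : Fin k) → Fin (L i)) → ℝ) {j : ℕ} (hj : j < k)
    (s : (i : Fin j) → Fin (L i)) :
    subtreeSum f j hj.le s = ∑ c, subtreeSum f (j + 1) hj (Fin.snoc s c) := by
  simp only [subtreeSum, sum_filter, Fin.take_succ_eq_snoc _ hj, Fin.snoc_inj]
  rw [sum_comm]
  refine sum_congr rfl fun t _ => ?_
  simp [ite_and]

theorem subtreeSum_const (a : ℝ) {j : ℕ} (hj : j ≤ k) (s : (i : Fin j) → Fin (L i)) :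
    subtreeSum (fun _ => a) j hj s = a * ∏ i ∈ Ico j k, (L i : ℝ) := by
  induction hd : k - j generalizing j with
  | zero =>
    obtain rfl : j = k := by omega
    simp [subtreeSum_self]
  | succ d ih =>
    have hjk : j < k := by omega
    rw [subtreeSum_eq_sum_snoc _ hjk, prod_eq_prod_Ico_succ_bot hjk]
    simp only [ih hjk _ (by omega), sum_const, card_univ, Fintype.card_fin, Fin.val_last,
      nsmul_eq_mul, Nat.succ_eq_add_one]
    ring

theorem subtreeSum_eq_mul_of_forall {f : ((i : Fin k) → Fin (L i)) → ℝ} {j : ℕ} (hj : j ≤ k)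
    {s : (i : Fin j) → Fin (L i)} {a : ℝ} (hf : ∀ t, Fin.take j hj t = s → f t = a) :
    subtreeSum f j hj s = a * ∏ i ∈ Ico j k, (L i : ℝ) := by
  rw [← subtreeSum_const a hj s]
  exact sum_congr rfl fun t ht => hf t (mem_filter.1 ht).2

noncomputable def subtreeAvg (f : ((i : Fin k) → Fin (L i)) → ℝ) (j : ℕ) (hj : j ≤ k)
    (s : (i : Fin j) → Fin (L i)) : ℝ :=
  subtreeSum f j hj s / ∏ i ∈ Ico j k, (L i : ℝ)

theorem subtreeAvg_self (f : ((i : Fin k) → Fin (L i)) → ℝ) (s : (i : Fin k) → Fin (L i)) :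
    subtreeAvg f k le_rfl s = f s := by
  simp [subtreeAvg, subtreeSum_self]

theorem subtreeAvg_eq_sum_snoc_div (f : ((i : Fin k) → Fin (L i)) → ℝ) {j : ℕ} (hj : j < k)
    (s : (i : Fin j) → Fin (L i)) :
    subtreeAvg f j hj.le s = (∑ c, subtreeAvg f (j + 1) hj (Fin.snoc s c)) / L j := by
  rw [subtreeAvg, subtreeSum_eq_sum_snoc f hj, prod_eq_prod_Ico_succ_bot hj, mul_comm, ← div_div,
    sum_div]
  rfl

theorem abs_sub_subtreeAvg_le (x : (j : ℕ) → ((i : Fin j) → Fin (L i)) → ℝ)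
    {δ : ℝ} (hδ : 0 ≤ δ) {j : ℕ} (hj : j ≤ k)
    (hx : ∀ l, j ≤ l → l < k → ∀ s : (i : Fin l) → Fin (L i),
      |x l s - (∑ c : Fin (L l), x (l + 1) (Fin.snoc s c)) / (L l : ℝ)| ≤ δ)
    (s : (i : Fin j) → Fin (L i)) :
    |x j s - subtreeAvg (x k) j hj s| ≤ (k - j : ℕ) * δ := by
  induction hd : k - j generalizing j with
  | zero =>
    obtain rfl : j = k := by omega
    simp [subtreeAvg_self]
  | succ d ih =>
    have hjk : j < k := by omega
    have hchild : ∀ c, |x (j + 1) (Fin.snoc s c) - subtreeAvg (x k) (j + 1) hjk (Fin.snoc s c)|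
        ≤ d * δ := fun c => ih hjk (fun l hl => hx l (by omega)) _ (by omega)
    rw [subtreeAvg_eq_sum_snoc_div _ hjk]
    calc _ ≤ |x j s - (∑ c, x (j + 1) (Fin.snoc s c)) / L j|
          + |(∑ c, x (j + 1) (Fin.snoc s c)) / L j
            - (∑ c, subtreeAvg (x k) (j + 1) hjk (Fin.snoc s c)) / L j| := abs_sub_le _ _ _
      _ ≤ δ + d * δ := by
        gcongr
        · exact hx j le_rfl hjk s
        · simpa using abs_sum_div_card_sub_sum_div_card_le univ (by positivity)
            fun c _ => hchild c
      _ = (d + 1 : ℕ) * δ := by push_cast; ring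

theorem abs_levelOneMean_sub_leafMean_le (hk : 0 < k)
    (x : (j : ℕ) → ((i : Fin j) → Fin (L i)) → ℝ) {δ : ℝ} (hδ : 0 ≤ δ)
    (hx : ∀ j, 1 ≤ j → j < k → ∀ s : (i : Fin j) → Fin (L i),
      |x j s - (∑ c : Fin (L j), x (j + 1) (Fin.snoc s c)) / (L j : ℝ)| ≤ δ) :
    |(∑ c : Fin (L 0), x 1 (Fin.snoc (fun i : Fin 0 => i.elim0) c)) / (L 0 : ℝ)
      - (∑ t : (i : Fin k) → Fin (L i), x k t) / ∏ i ∈ range k, (L i : ℝ)| ≤ (k - 1 : ℕ) * δ := by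
  rw [← subtreeSum_zero _ (fun i : Fin 0 => i.elim0), range_eq_Ico, ← subtreeAvg,
    subtreeAvg_eq_sum_snoc_div _ hk]
  simpa using abs_sum_div_card_sub_sum_div_card_le univ (by positivity)
    fun c _ => abs_sub_subtreeAvg_le x hδ hk hx (Fin.snoc _ c)

theorem sum_apply_zero_eq_mul_sum (hk : 0 < k) (g : Fin (L 0) → ℝ) :
    ∑ t : (i : Fin k) → Fin (L i), g (t ⟨0, hk⟩) = (∏ i ∈ Ico 1 k, (L i : ℝ)) * ∑ c, g c := by
  rw [← subtreeSum_zero _ (fun i : Fin 0 => i.elim0), subtreeSum_eq_sum_snoc _ hk, mul_sum]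
  refine sum_congr rfl fun c _ => ?_
  rw [subtreeSum_eq_mul_of_forall hk (a := g c) fun t ht => ?_, mul_comm]
  exact congrArg g (congrFun ht 0)

end Hierarchy

theorem one_add_sq_le_two_pow_succ (m : ℕ) : 1 + m ^ 2 ≤ 2 ^ (m + 1) := by
  induction m with
  | zero => norm_num
  | succ m ih =>
    have := Nat.lt_two_pow_self (n := m)
    rw [show 2 ^ (m + 1 + 1) = 2 ^ (m + 1) + 2 * 2 ^ m by ring]
    nlinarith

theorem one_add_sq_le_prod {L : ℕ → ℕ} {k : ℕ} (hk : 0 < k) (hL : ∀ i, i < k → 2 ≤ L i) :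
    1 + ((k - 1 : ℕ) : ℝ) ^ 2 ≤ ∏ i ∈ range k, (L i : ℝ) := by
  have h2k : 2 ^ k ≤ ∏ i ∈ range k, L i := by
    simpa using prod_le_prod' fun i hi => hL i (mem_range.1 hi)
  have := one_add_sq_le_two_pow_succ (k - 1)
  rw [Nat.sub_add_cancel hk] at this
  exact_mod_cast this.trans h2k

theorem prod_Ico_one_add_prod_mul_sq_le {L : ℕ → ℕ} {k : ℕ} (hk : 0 < k)
    (hL : ∀ i, i < k → 2 ≤ L i) :
    ∏ i ∈ Ico 1 k, (L i : ℝ) + (∏ i ∈ range k, (L i : ℝ)) * ((k - 1 : ℕ) : ℝ) ^ 2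
      ≤ (∏ i ∈ range k, (L i : ℝ)) ^ 2 := by
  have hL0 : (1 : ℝ) ≤ L 0 := by exact_mod_cast (hL 0 hk).trans' one_le_two
  have hN : 0 ≤ ∏ i ∈ Ico 1 k, (L i : ℝ) := by positivity
  have hP : ∏ i ∈ range k, (L i : ℝ) = L 0 * ∏ i ∈ Ico 1 k, (L i : ℝ) := by
    rw [range_eq_Ico, prod_eq_prod_Ico_succ_bot hk]
  nlinarith [one_add_sq_le_prod hk hL, mul_le_mul_of_nonneg_right hL0 hN]

theorem multiscale_gossip_final_error_general
    (k : ℕ) (hk : 1 ≤ k) (L : ℕ → ℕ) (hL : ∀ i, i < k → 2 ≤ L i)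
    (ε : ℝ) (hε : 0 ≤ ε)
    (x : (j : ℕ) → ((i : Fin j) → Fin (L i)) → ℝ)
    (normx xav mbar : ℝ)
    (hnorm : normx = Real.sqrt (∑ t : (i : Fin k) → Fin (L i), (x k t) ^ 2))
    (hxav : xav = (∑ t : (i : Fin k) → Fin (L i), x k t) / (∏ i ∈ Finset.range k, (L i : ℝ)))
    (hmbar : mbar = (∑ c : Fin (L 0), x 1 (Fin.snoc (fun i : Fin 0 => i.elim0) c)) / (L 0 : ℝ))
    (hacc : ∀ j, 1 ≤ j → j < k → ∀ s : (i : Fin j) → Fin (L i),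
      |x j s - (∑ c : Fin (L j), x (j + 1) (Fin.snoc s c)) / (L j : ℝ)| ≤ ε * normx)
    (y : Fin (L 0) → ℝ)
    (hy1 : ∑ s : Fin (L 0), (y s - mbar) ^ 2 ≤ ε ^ 2 * normx ^ 2) :
    Real.sqrt (∑ t : (i : Fin k) → Fin (L i), (y (t ⟨0, hk⟩) - xav) ^ 2)
      ≤ Real.sqrt 2 * (∏ i ∈ Finset.range k, (L i : ℝ)) * ε * normx
    ∧ (normx ≠ 0 →
        Real.sqrt (∑ t : (i : Fin k) → Fin (L i), (y (t ⟨0, hk⟩) - xav) ^ 2) / normx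
          ≤ Real.sqrt 2 * (∏ i ∈ Finset.range k, (L i : ℝ)) * ε) := by
  have hX : 0 ≤ normx := hnorm ▸ Real.sqrt_nonneg _
  have hδ : 0 ≤ ε * normx := mul_nonneg hε hX
  set P := ∏ i ∈ range k, (L i : ℝ)
  set N := ∏ i ∈ Ico 1 k, (L i : ℝ)
  have hP : P = L 0 * N := by simp only [P, N, range_eq_Ico, prod_eq_prod_Ico_succ_bot hk]
  have hgap : |mbar - xav| ≤ (k - 1 : ℕ) * (ε * normx) :=
    hmbar ▸ hxav ▸ abs_levelOneMean_sub_leafMean_le hk x hδ hacc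
  have hdev : ∑ c, (y c - xav) ^ 2
      ≤ 2 * (ε * normx) ^ 2 + 2 * L 0 * ((k - 1 : ℕ) * (ε * normx)) ^ 2 := by
    have hsplit := sum_sq_sub_le univ y mbar xav
    simp only [card_univ, Fintype.card_fin] at hsplit
    nlinarith [hy1, sq_le_sq' (abs_le.1 hgap).1 (abs_le.1 hgap).2]
  have hsq : ∑ t : (i : Fin k) → Fin (L i), (y (t ⟨0, hk⟩) - xav) ^ 2
      ≤ (Real.sqrt 2 * P * ε * normx) ^ 2 :=
    calc _ = N * ∑ c, (y c - xav) ^ 2 := sum_apply_zero_eq_mul_sum hk _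
      _ ≤ N * (2 * (ε * normx) ^ 2 + 2 * L 0 * ((k - 1 : ℕ) * (ε * normx)) ^ 2) := by gcongr
      _ = 2 * (ε * normx) ^ 2 * (N + P * ((k - 1 : ℕ) : ℝ) ^ 2) := by rw [hP]; ring
      _ ≤ 2 * (ε * normx) ^ 2 * P ^ 2 :=
        mul_le_mul_of_nonneg_left (prod_Ico_one_add_prod_mul_sq_le hk hL) (by positivity)
      _ = (Real.sqrt 2 * P * ε * normx) ^ 2 := by
        simp only [mul_pow, Real.sq_sqrt zero_le_two]; ring
  have hmain := Real.sqrt_le_iff.2 ⟨by positivity, hsq⟩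
  exact ⟨hmain, fun h => (div_le_iff₀ (hX.lt_of_ne' h)).2 hmain⟩

/-- **Final error of multiscale gossip (deterministic conclusion of Theorem 2).**
Under the hypotheses of the previous statement, and assuming additionally
`L_j ≥ 2` for every level, the final vector `z (l₁,…,l_k) = y l₁` satisfies
`‖z - x_av 𝟙‖ ≤ √2 · n · ε · ‖x‖`; in particular, when `‖x‖ ≠ 0`, the final
relative error is at most `√2 · n · ε`. -/
theorem multiscale_gossip_final_error
    (k : ℕ) (hk : 1 ≤ k) (L : ℕ → ℕ) (hL : ∀ i, i < k → 2 ≤ L i)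
    (ε : ℝ) (hε : 0 ≤ ε)
    (x : (j : ℕ) → ((i : Fin j) → Fin (L i)) → ℝ)
    (normx xav mbar : ℝ)
    (hnorm : normx = Real.sqrt (∑ t : (i : Fin k) → Fin (L i), (x k t) ^ 2))
    (hxav : xav = (∑ t : (i : Fin k) → Fin (L i), x k t) / (∏ i ∈ Finset.range k, (L i : ℝ)))
    (hmbar : mbar = (∑ c : Fin (L 0), x 1 (Fin.snoc (fun i : Fin 0 => i.elim0) c)) / (L 0 : ℝ))
    (hacc : ∀ j, 1 ≤ j → j < k → ∀ s : (i : Fin j) → Fin (L i),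
      |x j s - (∑ c : Fin (L j), x (j + 1) (Fin.snoc s c)) / (L j : ℝ)| ≤ ε * normx)
    (y : Fin (L 0) → ℝ)
    (hy1 : ∑ s : Fin (L 0), (y s - mbar) ^ 2 ≤ ε ^ 2 * normx ^ 2)
    (hy2 : ∑ s : Fin (L 0), y s
      = ∑ c : Fin (L 0), x 1 (Fin.snoc (fun i : Fin 0 => i.elim0) c)) :
    Real.sqrt (∑ t : (i : Fin k) → Fin (L i), (y (t ⟨0, hk⟩) - xav) ^ 2)
      ≤ Real.sqrt 2 * (∏ i ∈ Finset.range k, (L i : ℝ)) * ε * normx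
    ∧ (normx ≠ 0 →
        Real.sqrt (∑ t : (i : Fin k) → Fin (L i), (y (t ⟨0, hk⟩) - xav) ^ 2) / normx
          ≤ Real.sqrt 2 * (∏ i ∈ Finset.range k, (L i : ℝ)) * ε) :=
  multiscale_gossip_final_error_general k hk L hL ε hε x normx xav mbar hnorm hxav hmbar hacc y hy1
end
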